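/- arXiv:2309.04683 — 4 statements merged into one kernel-verified Lean document; each statement's English description precedes it below -/
import Mathlib

section
/- Let b < ℓ be positive integers and let q_1, …, q_b be distinct primes all greater than ℓ. For x ∈ {0,1}^{b·ℓ}, partition x into ℓ consecutive blocks x^1, …, x^ℓ of length b each, and define ψ(x) ∈ ℤ^ℓ by letting ψ(x)_d be the unique integer in [0, ∏_j q_j) congruent to x^d[t] modulo q_t for every t ∈ [b] (Chinese remaindering over the block). Then for all x_1, …, x_k ∈ {0,1}^{b·ℓ}: the k-wise inner product ⟨x_1,…,x_k⟩ = ∑_{d=1}^{b·ℓ} ∏_{i=1}^{k} x_i[d] equals 0 if and only if for every t ∈ [b], the prime q_t divides the k-wise inner product ∑_{d=1}^{ℓ} ∏_{i=1}^{k} ψ(x_i)_d. -/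
/-- Base case of the CRR encoding: with distinct primes `q t > ℓ` and
`ψ x d` the Chinese-remainder encoding of the `d`-th block of `x`
(an integer in `[0, ∏ q)` congruent to `x d t` mod `q t` for each `t`),
the k-wise inner product of 0/1 vectors `x i` is zero iff for every `t`
the prime `q t` divides the k-wise inner product of the encodings. -/
theorem crr_encoding_base (b ℓ k : ℕ) (hb : 0 < b) (hbl : b < ℓ)
    (q : Fin b → ℕ) (hq : ∀ t, (q t).Prime) (hinj : Function.Injective q)
    (hql : ∀ t, ℓ < q t)
    (ψ : (Fin ℓ → Fin b → ℕ) → Fin ℓ → ℕ)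
    (hψrange : ∀ x d, ψ x d < ∏ t, q t)
    (hψ : ∀ (x : Fin ℓ → Fin b → ℕ) (d : Fin ℓ) (t : Fin b),
      ψ x d ≡ x d t [MOD q t])
    (x : Fin k → Fin ℓ → Fin b → ℕ) (hx : ∀ i d t, x i d t ≤ 1) :
    (∑ d : Fin ℓ, ∑ t : Fin b, ∏ i : Fin k, x i d t) = 0 ↔
      ∀ t : Fin b, (q t) ∣ (∑ d : Fin ℓ, ∏ i : Fin k, ψ (x i) d) := by
  -- congruence of the two inner products mod q t
  have hcong : ∀ t : Fin b,
      (∑ d : Fin ℓ, ∏ i : Fin k, ψ (x i) d) ≡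
      (∑ d : Fin ℓ, ∏ i : Fin k, x i d t) [MOD q t] := by
    intro t
    have : ((∑ d : Fin ℓ, ∏ i : Fin k, ψ (x i) d : ℕ) : ZMod (q t)) =
        ((∑ d : Fin ℓ, ∏ i : Fin k, x i d t : ℕ) : ZMod (q t)) := by
      push_cast
      refine Finset.sum_congr rfl fun d _ => Finset.prod_congr rfl fun i _ => ?_
      exact (ZMod.natCast_eq_natCast_iff _ _ _).mpr (hψ (x i) d t)
    exact (ZMod.natCast_eq_natCast_iff _ _ _).mp this
  constructor
  · intro h t
    have hterm : ∀ d t', (∏ i : Fin k, x i d t') = 0 := by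
      intro d t'
      have h1 := (Finset.sum_eq_zero_iff.mp h) d (Finset.mem_univ d)
      exact (Finset.sum_eq_zero_iff.mp h1) t' (Finset.mem_univ t')
    have hz : (∑ d : Fin ℓ, ∏ i : Fin k, x i d t) = 0 :=
      Finset.sum_eq_zero fun d _ => hterm d t
    have : (∑ d : Fin ℓ, ∏ i : Fin k, ψ (x i) d) ≡ 0 [MOD q t] := by
      rw [← hz]; exact hcong t
    exact (Nat.modEq_zero_iff_dvd).mp this
  · intro h
    refine Finset.sum_eq_zero fun d _ => Finset.sum_eq_zero fun t _ => ?_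
    have hdvd : q t ∣ ∑ d' : Fin ℓ, ∏ i : Fin k, x i d' t :=
      (Nat.modEq_zero_iff_dvd).mp
        ((hcong t).symm.trans ((Nat.modEq_zero_iff_dvd).mpr (h t)))
    have hle : (∑ d' : Fin ℓ, ∏ i : Fin k, x i d' t) ≤ ℓ := by
      calc (∑ d' : Fin ℓ, ∏ i : Fin k, x i d' t)
          ≤ ∑ _d' : Fin ℓ, 1 :=
            Finset.sum_le_sum fun d' _ =>
              Finset.prod_le_one (fun i _ => Nat.zero_le _) (fun i _ => hx i d' t)
        _ = ℓ := by simp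
    have hz : (∑ d' : Fin ℓ, ∏ i : Fin k, x i d' t) = 0 :=
      Nat.eq_zero_of_dvd_of_lt hdvd (lt_of_le_of_lt hle (hql t))
    exact (Finset.sum_eq_zero_iff.mp hz) d (Finset.mem_univ d)
end

section
/- Let n ≥ 1, let a_1, …, a_n, b_1, …, b_n ∈ ℤ^d, and define vectors y_1, …, y_{2n} ∈ ℤ^d by y_j = 0 for 1 ≤ j ≤ n and y_j = a_{j−n} for n+1 ≤ j ≤ 2n, and vectors z_1, …, z_{2n} by z_j = b_j for 1 ≤ j ≤ n and z_j = 0 for n+1 ≤ j ≤ 2n. Define w[i,j] = ⟨y_j, z_i⟩ for 1 ≤ i < j ≤ 2n, and define T : {1,…,2n} → ℤ ∪ {∞} by T[1] = 0 and T[j] = min_{1 ≤ i < j} ( T[i] + w[i,j] ) for j > 1. Then for every 1 ≤ m ≤ n, T[n+m] = min { ⟨a_s, b_t⟩ : 1 ≤ s ≤ m, 1 ≤ t ≤ n }; in particular T[2n] = min_{s,t ∈ [n]} ⟨a_s, b_t⟩. -/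
/-- Reduction from Min-IP to 1D LWS (k = 2 case of kMin-IP → (k−1)D LWS).
Vectors `a i, b i` (indices `1 ≤ i ≤ n`) are embedded into `y, z` on indices
`1,…,2n`; the LWS table then computes partial minima of inner products. -/
theorem minIP_to_LWS (n d : ℕ) (hn : 1 ≤ n) (a b : ℕ → Fin d → ℤ)
    (w : ℕ → ℕ → ℤ)
    (hw : ∀ i j, w i j =
      ∑ s : Fin d, (if j ≤ n then 0 else a (j - n) s) * (if i ≤ n then b i s else 0))
    (T : ℕ → WithTop ℤ) (hT1 : T 1 = 0)
    (hT : ∀ j, 2 ≤ j → j ≤ 2 * n →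
      T j = (Finset.Ico 1 j).inf fun i => T i + (w i j : WithTop ℤ)) :
    ∀ m, 1 ≤ m → m ≤ n →
      T (n + m) = ((Finset.Icc 1 m) ×ˢ (Finset.Icc 1 n)).inf
        (fun p : ℕ × ℕ => ((∑ s : Fin d, a p.1 s * b p.2 s : ℤ) : WithTop ℤ)) := by
  have hw1 : ∀ t m, t ≤ n → 1 ≤ m → w t (n + m) = ∑ s : Fin d, a m s * b t s := by
    intro t m htn hm
    rw [hw]
    have h1 : ¬ (n + m ≤ n) := by omega
    have h2 : n + m - n = m := by omega
    simp [h1, h2, htn]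
  have hw2 : ∀ i j, n < i → w i j = 0 := by
    intro i j hi
    rw [hw]
    have h : ¬ (i ≤ n) := by omega
    simp [h]
  have hT0 : ∀ j, 1 ≤ j → j ≤ n → T j = 0 := by
    intro j
    induction j using Nat.strong_induction_on with
    | _ j ih =>
      intro hj1 hjn
      rcases Nat.eq_or_lt_of_le hj1 with h | h
      · rw [← h]; exact hT1
      · have h2 : 2 ≤ j := h
        rw [hT j h2 (by omega)]
        apply le_antisymm
        · refine le_trans (Finset.inf_le (Finset.mem_Ico.mpr ⟨le_refl 1, by omega⟩)) ?_
          rw [hT1]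
          have hwz : w 1 j = 0 := by rw [hw]; simp [hjn]
          simp [hwz]
        · apply Finset.le_inf
          intro i hi
          rw [Finset.mem_Ico] at hi
          rw [ih i hi.2 hi.1 (by omega)]
          have hwz : w i j = 0 := by rw [hw]; simp [hjn]
          simp [hwz]
  intro m
  induction m using Nat.strong_induction_on with
  | _ m ih =>
    intro hm1 hmn
    rw [hT (n + m) (by omega) (by omega)]
    apply le_antisymm
    · apply Finset.le_inf
      intro p hp
      simp only [Finset.mem_product, Finset.mem_Icc] at hp
      obtain ⟨⟨hs1, hsm⟩, ht1, htn⟩ := hp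
      rcases Nat.eq_or_lt_of_le hsm with h | h
      · have hmem : p.2 ∈ Finset.Ico 1 (n + m) := Finset.mem_Ico.mpr ⟨ht1, by omega⟩
        refine le_trans (Finset.inf_le hmem) ?_
        rw [hT0 p.2 ht1 htn, hw1 p.2 m htn hm1, h]
        simp
      · have hmem : n + p.1 ∈ Finset.Ico 1 (n + m) := Finset.mem_Ico.mpr ⟨by omega, by omega⟩
        refine le_trans (Finset.inf_le hmem) ?_
        rw [hw2 (n + p.1) (n + m) (by omega), ih p.1 h hs1 (by omega)]
        simp only [Int.cast_zero, WithTop.coe_zero, add_zero]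
        refine Finset.inf_le ?_
        simp [Finset.mem_product, hs1, ht1, htn]
    · apply Finset.le_inf
      intro i hi
      rw [Finset.mem_Ico] at hi
      by_cases hin : i ≤ n
      · rw [hT0 i hi.1 hin, hw1 i m hin hm1]
        have hmem : (m, i) ∈ (Finset.Icc 1 m) ×ˢ (Finset.Icc 1 n) := by
          simp [hm1, hi.1, hin]
        refine le_trans (Finset.inf_le hmem) ?_
        simp
      · have heq : i = n + (i - n) := by omega
        rw [hw2 i (n + m) (by omega), heq, ih (i - n) (by omega) (by omega) (by omega)]
        simp only [Int.cast_zero, WithTop.coe_zero, add_zero]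
        refine Finset.inf_mono ?_
        exact Finset.product_subset_product (Finset.Icc_subset_Icc_right (by omega)) subset_rfl
end

section
/- Let n ≥ 1 and let c : [n] × [n] → ℤ be a symmetric weight function with c(a,a) = ∞ for all a (working in ℤ ∪ {∞}). Define the order-3 tensor α on indices in [2n] by: α[i,j,k] = c(i−n, k)·[j ∈ [n+1,2n]] + c(i−n, j−n)·[k ∈ [1,n]] + c(k, j−n)·[i ∈ [n+1,2n]], where each summand is taken to be 0 when its c-argument indices fall outside [n] (precisely as in the slice-rank-3 construction: the first term is c(i−n,k) when i ∈ [n+1,2n], k ∈ [1,n], j ∈ [n+1,2n] and 0 otherwise; the second is c(i−n,j−n) when i,j ∈ [n+1,2n], k ∈ [1,n] and 0 otherwise; the third is c(k,j−n) when k ∈ [1,n], i,j ∈ [n+1,2n] and 0 otherwise). Define T : [2n] × [2n] → ℤ ∪ {∞} by T[1,1] = 0 and T[i,j] = min( min_{1 ≤ k < i} (T[k,j] + α[i,j,k]), min_{1 ≤ k < j} (T[i,k] + α[i,j,k]) ). Then for all i, j ∈ [n+1, 2n], T[i,j] = min { c(a,b) + c(b,d) + c(a,d) : 1 ≤ a ≤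 i−n, 1 ≤ b ≤ j−n, 1 ≤ d ≤ n }. -/
/-- Correctness invariant of the reduction from Negative Triangle to 2D LWS
with a slice-rank-3 tensor. -/
theorem negativeTriangle_to_2DLWS (n : ℕ) (hn : 1 ≤ n)
    (c : ℕ → ℕ → WithTop ℤ)
    (hsymm : ∀ a b, c a b = c b a) (hdiag : ∀ a, c a a = ⊤)
    (α : ℕ → ℕ → ℕ → WithTop ℤ)
    (hα : ∀ i j k, α i j k =
      (if n + 1 ≤ i ∧ i ≤ 2 * n ∧ 1 ≤ k ∧ k ≤ n ∧ n + 1 ≤ j ∧ j ≤ 2 * n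
        then c (i - n) k else 0) +
      (if n + 1 ≤ i ∧ i ≤ 2 * n ∧ n + 1 ≤ j ∧ j ≤ 2 * n ∧ 1 ≤ k ∧ k ≤ n
        then c (i - n) (j - n) else 0) +
      (if 1 ≤ k ∧ k ≤ n ∧ n + 1 ≤ j ∧ j ≤ 2 * n ∧ n + 1 ≤ i ∧ i ≤ 2 * n
        then c k (j - n) else 0))
    (T : ℕ → ℕ → WithTop ℤ) (hT11 : T 1 1 = 0)
    (hT : ∀ i j, 1 ≤ i → i ≤ 2 * n → 1 ≤ j → j ≤ 2 * n → ¬(i = 1 ∧ j = 1) →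
      T i j = min ((Finset.Ico 1 i).inf fun k => T k j + α i j k)
                  ((Finset.Ico 1 j).inf fun k => T i k + α i j k)) :
    ∀ i j, n + 1 ≤ i → i ≤ 2 * n → n + 1 ≤ j → j ≤ 2 * n →
      T i j = ((Finset.Icc 1 (i - n)) ×ˢ (Finset.Icc 1 (j - n)) ×ˢ (Finset.Icc 1 n)).inf
        (fun p : ℕ × ℕ × ℕ => c p.1 p.2.1 + c p.2.1 p.2.2 + c p.1 p.2.2) := by
  -- α vanishes outside the "all six bounds" region
  have hα0 : ∀ i j k, ¬(n + 1 ≤ i ∧ i ≤ 2 * n ∧ n + 1 ≤ j ∧ j ≤ 2 * n ∧ 1 ≤ k ∧ k ≤ n) →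
      α i j k = 0 := by
    intro i j k h
    rw [hα, if_neg (by omega), if_neg (by omega), if_neg (by omega)]
    simp
  have hα1 : ∀ i j k, (n + 1 ≤ i ∧ i ≤ 2 * n ∧ n + 1 ≤ j ∧ j ≤ 2 * n ∧ 1 ≤ k ∧ k ≤ n) →
      α i j k = c (i - n) k + c (i - n) (j - n) + c k (j - n) := by
    intro i j k h
    rw [hα, if_pos (by omega), if_pos (by omega), if_pos (by omega)]
  -- T is zero on the boundary region
  have hT0 : ∀ m i j, i + j ≤ m → 1 ≤ i → i ≤ 2 * n → 1 ≤ j → j ≤ 2 * n →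
      (i ≤ n ∨ j ≤ n) → T i j = 0 := by
    intro m
    induction m with
    | zero => intro i j h h1 _ h3 _ _; omega
    | succ m ih =>
      intro i j hm h1i h2i h1j h2j hreg
      by_cases hij : i = 1 ∧ j = 1
      · rw [hij.1, hij.2]; exact hT11
      · rw [hT i j h1i h2i h1j h2j hij]
        have e1 : ∀ k ∈ Finset.Ico 1 i, T k j + α i j k = 0 := by
          intro k hk
          rw [Finset.mem_Ico] at hk
          rw [hα0 i j k (by omega),
            ih k j (by omega) (by omega) (by omega) h1j h2j (by omega), add_zero]
        have e2 : ∀ k ∈ Finset.Ico 1 j, T i k + α i j k = 0 := by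
          intro k hk
          rw [Finset.mem_Ico] at hk
          rw [hα0 i j k (by omega),
            ih i k (by omega) h1i h2i (by omega) (by omega) (by omega), add_zero]
        apply le_antisymm
        · rcases (by omega : 2 ≤ i ∨ 2 ≤ j) with h | h
          · calc min ((Finset.Ico 1 i).inf fun k => T k j + α i j k)
                  ((Finset.Ico 1 j).inf fun k => T i k + α i j k)
                ≤ (Finset.Ico 1 i).inf fun k => T k j + α i j k := min_le_left _ _
              _ ≤ T 1 j + α i j 1 := Finset.inf_le (Finset.mem_Ico.mpr ⟨le_refl 1, by omega⟩)
              _ = 0 := e1 1 (Finset.mem_Ico.mpr ⟨le_refl 1, by omega⟩)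
          · calc min ((Finset.Ico 1 i).inf fun k => T k j + α i j k)
                  ((Finset.Ico 1 j).inf fun k => T i k + α i j k)
                ≤ (Finset.Ico 1 j).inf fun k => T i k + α i j k := min_le_right _ _
              _ ≤ T i 1 + α i j 1 := Finset.inf_le (Finset.mem_Ico.mpr ⟨le_refl 1, by omega⟩)
              _ = 0 := e2 1 (Finset.mem_Ico.mpr ⟨le_refl 1, by omega⟩)
        · refine le_min (Finset.le_inf ?_) (Finset.le_inf ?_)
          · intro k hk; exact (e1 k hk).ge
          · intro k hk; exact (e2 k hk).ge
  -- main induction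
  have key : ∀ m i j, i + j ≤ m → n + 1 ≤ i → i ≤ 2 * n → n + 1 ≤ j → j ≤ 2 * n →
      T i j = ((Finset.Icc 1 (i - n)) ×ˢ (Finset.Icc 1 (j - n)) ×ˢ (Finset.Icc 1 n)).inf
        (fun p : ℕ × ℕ × ℕ => c p.1 p.2.1 + c p.2.1 p.2.2 + c p.1 p.2.2) := by
    intro m
    induction m with
    | zero => intro i j h h1 _ _ _; omega
    | succ m ih =>
      intro i j hm h1i h2i h1j h2j
      rw [hT i j (by omega) (by omega) (by omega) (by omega) (by omega)]
      apply le_antisymm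
      · apply Finset.le_inf
        intro p hp
        obtain ⟨a, b, d⟩ := p
        simp only [Finset.mem_product, Finset.mem_Icc] at hp
        obtain ⟨⟨ha1, ha2⟩, ⟨hb1, hb2⟩, ⟨hd1, hd2⟩⟩ := hp
        dsimp only
        by_cases hab : a = i - n ∧ b = j - n
        · obtain ⟨hA, hB⟩ := hab
          subst hA; subst hB
          have heq : T d j + α i j d
              = c (i - n) (j - n) + c (j - n) d + c (i - n) d := by
            rw [hT0 (d + j) d j le_rfl hd1 (by omega) (by omega) (by omega) (Or.inl hd2),
              hα1 i j d (by omega), zero_add, hsymm d (j - n)]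
            abel
          calc min ((Finset.Ico 1 i).inf fun k => T k j + α i j k)
                ((Finset.Ico 1 j).inf fun k => T i k + α i j k)
              ≤ (Finset.Ico 1 i).inf fun k => T k j + α i j k := min_le_left _ _
            _ ≤ T d j + α i j d := Finset.inf_le (Finset.mem_Ico.mpr ⟨hd1, by omega⟩)
            _ = _ := heq
        · rcases (by omega : a + n < i ∨ b + n < j) with h | h
          · have hTk := ih (a + n) j (by omega) (by omega) (by omega) h1j h2j
            calc min ((Finset.Ico 1 i).inf fun k => T k j + α i j k)
                  ((Finset.Ico 1 j).inf fun k => T i k + α i j k)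
                ≤ (Finset.Ico 1 i).inf fun k => T k j + α i j k := min_le_left _ _
              _ ≤ T (a + n) j + α i j (a + n) :=
                  Finset.inf_le (Finset.mem_Ico.mpr ⟨by omega, h⟩)
              _ = T (a + n) j := by rw [hα0 i j (a + n) (by omega), add_zero]
              _ = _ := hTk
              _ ≤ c a b + c b d + c a d := Finset.inf_le
                  (b := ((a, b, d) : ℕ × ℕ × ℕ)) (by
                  simp only [Finset.mem_product, Finset.mem_Icc]; omega)
          · have hTk := ih i (b + n) (by omega) h1i h2i (by omega) (by omega)
            calc min ((Finset.Ico 1 i).inf fun k => T k j + α i j k)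
                  ((Finset.Ico 1 j).inf fun k => T i k + α i j k)
                ≤ (Finset.Ico 1 j).inf fun k => T i k + α i j k := min_le_right _ _
              _ ≤ T i (b + n) + α i j (b + n) :=
                  Finset.inf_le (Finset.mem_Ico.mpr ⟨by omega, h⟩)
              _ = T i (b + n) := by rw [hα0 i j (b + n) (by omega), add_zero]
              _ = _ := hTk
              _ ≤ c a b + c b d + c a d := Finset.inf_le
                  (b := ((a, b, d) : ℕ × ℕ × ℕ)) (by
                  simp only [Finset.mem_product, Finset.mem_Icc]; omega)
      · apply le_min
        · apply Finset.le_inf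
          intro k hk
          rw [Finset.mem_Ico] at hk
          by_cases hkn : k ≤ n
          · have heq : T k j + α i j k
                = c (i - n) k + c (i - n) (j - n) + c k (j - n) := by
              rw [hT0 (k + j) k j le_rfl hk.1 (by omega) (by omega) (by omega) (Or.inl hkn),
                hα1 i j k (by omega), zero_add]
            rw [heq]
            refine le_trans (Finset.inf_le (b := ((i - n, j - n, k) : ℕ × ℕ × ℕ)) ?_)
              (le_of_eq ?_)
            · simp only [Finset.mem_product, Finset.mem_Icc]; omega
            · dsimp only
              rw [hsymm (j - n) k]
              abel
          · rw [hα0 i j k (by omega), add_zero,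
              ih k j (by omega) (by omega) (by omega) h1j h2j]
            exact Finset.inf_mono (Finset.product_subset_product
              (Finset.Icc_subset_Icc le_rfl (by omega)) Finset.Subset.rfl)
        · apply Finset.le_inf
          intro k hk
          rw [Finset.mem_Ico] at hk
          by_cases hkn : k ≤ n
          · have heq : T i k + α i j k
                = c (i - n) k + c (i - n) (j - n) + c k (j - n) := by
              rw [hT0 (i + k) i k le_rfl (by omega) (by omega) hk.1 (by omega) (Or.inr hkn),
                hα1 i j k (by omega), zero_add]
            rw [heq]
            refine le_trans (Finset.inf_le (b := ((i - n, j - n, k) : ℕ × ℕ × ℕ)) ?_)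
              (le_of_eq ?_)
            · simp only [Finset.mem_product, Finset.mem_Icc]; omega
            · dsimp only
              rw [hsymm (j - n) k]
              abel
          · rw [hα0 i j k (by omega), add_zero,
              ih i k (by omega) (by omega) (by omega) (by omega) (by omega)]
            exact Finset.inf_mono (Finset.product_subset_product Finset.Subset.rfl
              (Finset.product_subset_product
                (Finset.Icc_subset_Icc le_rfl (by omega)) Finset.Subset.rfl))
  exact fun i j h1 h2 h3 h4 => key (i + j) i j le_rfl h1 h2 h3 h4
end

section
/- Let n ≥ 1, let w : [n]³ → ℤ, and suppose w[i,j,k] = ⟨μ_i, σ_j, τ_k⟩ (the 3-wise inner product) for vectors μ_i, σ_j, τ_k ∈ ℤ^d. Define μ'_i = μ_i for i ∈ [1,n] and μ'_i = 0 for i ∈ [n+1,2n]; σ'_j = 0 for j ∈ [1,n] and σ'_j = σ_{j−n} for j ∈ [n+1,2n]; τ'_k = τ_k for k ∈ [1,n] and τ'_k = τ_{k−n} for k ∈ [n+1,2n]; and set w'[i,j,k] = ⟨μ'_i, σ'_j, τ'_k⟩ on [2n]³. Let T : [n] × [n] → ℤ ∪ {∞} satisfy the 2D LWS recurrence T[i,j]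 = min( min_{1 ≤ k < j} (T[i,k] + w[i,j,k]), min_{i < k ≤ n} (T[k,j] + w[i,j,k]) ) with appropriate base cases T[i,j] = 0 when the index ranges are empty, and let T' : [2n] × [2n] → ℤ ∪ {∞} satisfy the polygon-triangulation recurrence T'[i,j] = 0 if j − i ≤ 1 and T'[i,j] = min_{i < k < j} ( T'[i,k] + T'[k,j] + w'[i,j,k] ) otherwise. Then T'[i,j] = T[i, j−n] for all (i,j) ∈ [1,n] × [n+1,2n]; in particular T'[1,2n] = T[1,n]. -/
/-- Reduction from 2D LWS (with both weight tensors equal, of tensor rank `d`)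
to the polygon-triangulation recurrence 2D LWS^PT on `2n` indices. -/
theorem twoDLWS_to_PT (n d : ℕ) (hn : 1 ≤ n)
    (μ σ τ : ℕ → Fin d → ℤ)
    (w : ℕ → ℕ → ℕ → ℤ)
    (hwdef : ∀ i j k, w i j k = ∑ s : Fin d, μ i s * σ j s * τ k s)
    (μ' σ' τ' : ℕ → Fin d → ℤ)
    (hμ' : ∀ i, μ' i = if i ≤ n then μ i else 0)
    (hσ' : ∀ j, σ' j = if j ≤ n then 0 else σ (j - n))
    (hτ' : ∀ k, τ' k = if k ≤ n then τ k else τ (k - n))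
    (w' : ℕ → ℕ → ℕ → ℤ)
    (hw'def : ∀ i j k, w' i j k = ∑ s : Fin d, μ' i s * σ' j s * τ' k s)
    (T : ℕ → ℕ → WithTop ℤ)
    (hTbase : T n 1 = 0)
    (hT : ∀ i j, 1 ≤ i → i ≤ n → 1 ≤ j → j ≤ n → ¬(i = n ∧ j = 1) →
      T i j = min ((Finset.Ico 1 j).inf fun k => T i k + (w i j k : WithTop ℤ))
                  ((Finset.Ioc i n).inf fun k => T k j + (w i j k : WithTop ℤ)))
    (T' : ℕ → ℕ → WithTop ℤ)
    (hT'base : ∀ i j, j ≤ i + 1 → T' i j = 0)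
    (hT' : ∀ i j, 1 ≤ i → j ≤ 2 * n → i + 2 ≤ j →
      T' i j = (Finset.Ioo i j).inf fun k => T' i k + T' k j + (w' i j k : WithTop ℤ)) :
    ∀ i j, 1 ≤ i → i ≤ n → n + 1 ≤ j → j ≤ 2 * n → T' i j = T i (j - n) := by
  have hw0a : ∀ i j k, j ≤ n → w' i j k = 0 := by
    intro i j k hj
    simp [hw'def, hσ', hj]
  have hw0b : ∀ i j k, n + 1 ≤ i → w' i j k = 0 := by
    intro i j k hi
    have hi' : ¬ i ≤ n := by omega
    simp [hw'def, hμ', hi']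
  have hw1 : ∀ i j k, i ≤ n → n + 1 ≤ j → k ≤ n → w' i j k = w i (j - n) k := by
    intro i j k hi hj hk
    have hj' : ¬ j ≤ n := by omega
    simp [hw'def, hwdef, hμ', hσ', hτ', hi, hj', hk]
  have hw2 : ∀ i j k, i ≤ n → n + 1 ≤ j → n + 1 ≤ k → w' i j k = w i (j - n) (k - n) := by
    intro i j k hi hj hk
    have hj' : ¬ j ≤ n := by omega
    have hk' : ¬ k ≤ n := by omega
    simp [hw'def, hwdef, hμ', hσ', hτ', hi, hj', hk']
  -- T' vanishes on [1,n]²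
  have A : ∀ m i j, j - i ≤ m → 1 ≤ i → j ≤ n → T' i j = 0 := by
    intro m
    induction m with
    | zero =>
      intro i j h hi hj
      exact hT'base i j (by omega)
    | succ m ih =>
      intro i j h hi hj
      by_cases hji : j ≤ i + 1
      · exact hT'base i j hji
      · rw [hT' i j hi (by omega) (by omega)]
        have hz : ∀ k ∈ Finset.Ioo i j,
            T' i k + T' k j + (w' i j k : WithTop ℤ) = (fun _ => (0 : WithTop ℤ)) k := by
          intro k hk
          simp only [Finset.mem_Ioo] at hk
          rw [ih i k (by omega) hi (by omega), ih k j (by omega) (by omega) hj,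
              hw0a i j k hj]
          simp
        rw [Finset.inf_congr rfl hz, Finset.inf_const ⟨i + 1, by
          simp only [Finset.mem_Ioo]; omega⟩]
  -- T' vanishes on [n+1,2n]²
  have B : ∀ m i j, j - i ≤ m → n + 1 ≤ i → j ≤ 2 * n → T' i j = 0 := by
    intro m
    induction m with
    | zero =>
      intro i j h hi hj
      exact hT'base i j (by omega)
    | succ m ih =>
      intro i j h hi hj
      by_cases hji : j ≤ i + 1
      · exact hT'base i j hji
      · rw [hT' i j (by omega) (by omega) (by omega)]
        have hz : ∀ k ∈ Finset.Ioo i j,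
            T' i k + T' k j + (w' i j k : WithTop ℤ) = (fun _ => (0 : WithTop ℤ)) k := by
          intro k hk
          simp only [Finset.mem_Ioo] at hk
          rw [ih i k (by omega) hi (by omega), ih k j (by omega) (by omega) hj,
              hw0b i j k hi]
          simp
        rw [Finset.inf_congr rfl hz, Finset.inf_const ⟨i + 1, by
          simp only [Finset.mem_Ioo]; omega⟩]
  have M : ∀ m i j, j - i ≤ m → 1 ≤ i → i ≤ n → n + 1 ≤ j → j ≤ 2 * n →
      T' i j = T i (j - n) := by
    intro m
    induction m with
    | zero =>
      intro i j h hi1 hi2 hj1 hj2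
      omega
    | succ m ih =>
      intro i j h hi1 hi2 hj1 hj2
      by_cases hji : j ≤ i + 1
      · have hin : i = n := by omega
        have hjn : j = n + 1 := by omega
        rw [hT'base i j hji, hin, hjn]
        have : n + 1 - n = 1 := by omega
        rw [this, hTbase]
      · rw [hT' i j hi1 hj2 (by omega)]
        have hsplit : Finset.Ioo i j = Finset.Ioc i n ∪ Finset.Ioo n j := by
          ext k
          simp only [Finset.mem_Ioo, Finset.mem_Ioc, Finset.mem_union]
          omega
        rw [hsplit, Finset.inf_union]
        have h1 : (Finset.Ioc i n).inf (fun k => T' i k + T' k j + (w' i j k : WithTop ℤ))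
            = (Finset.Ioc i n).inf (fun k => T k (j - n) + (w i (j - n) k : WithTop ℤ)) := by
          apply Finset.inf_congr rfl
          intro k hk
          simp only [Finset.mem_Ioc] at hk
          rw [A n i k (by omega) hi1 hk.2,
              ih k j (by omega) (by omega) hk.2 hj1 hj2,
              hw1 i j k hi2 hj1 hk.2]
          simp
        have h2 : (Finset.Ioo n j).inf (fun k => T' i k + T' k j + (w' i j k : WithTop ℤ))
            = (Finset.Ico 1 (j - n)).inf (fun k => T i k + (w i (j - n) k : WithTop ℤ)) := by
          have himg : Finset.Ioo n j = (Finset.Ico 1 (j - n)).image (· + n) := by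
            ext k
            simp only [Finset.mem_Ioo, Finset.mem_image, Finset.mem_Ico]
            constructor
            · intro hk
              exact ⟨k - n, ⟨by omega, by omega⟩, by omega⟩
            · rintro ⟨a, ⟨ha1, ha2⟩, rfl⟩
              omega
          rw [himg, Finset.inf_image]
          apply Finset.inf_congr rfl
          intro a ha
          simp only [Finset.mem_Ico] at ha
          simp only [Function.comp]
          rw [ih i (a + n) (by omega) hi1 hi2 (by omega) (by omega),
              B n (a + n) j (by omega) (by omega) hj2,
              hw2 i j (a + n) hi2 hj1 (by omega)]
          have hh : a + n - n = a := by omega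
          rw [hh]
          simp
        rw [h1, h2, hT i (j - n) hi1 hi2 (by omega) (by omega) (by rintro ⟨h1, h2⟩; omega)]
        exact min_comm _ _
  intro i j hi1 hi2 hj1 hj2
  exact M (j - i) i j le_rfl hi1 hi2 hj1 hj2
end
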